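/- Let ξ, ξ₁, ξ₂, … be i.i.d. real random variables with E ξ = −a < 0, and let τ = min{n ≥ 1 : ξ₁ + … + ξ_n ≤ 0}. Let α > 1 and g(x) = (log max(x,1))^α. Assume E exp(c ξ) = ∞ for every c > 0 and E exp(g(ξ)) < ∞. Then for every ε ∈ (0,1), E exp((1−ε) g(a τ)) < ∞ (i.e., the conclusion of the main theorem holds with δ = 0). -/

import Mathlib

/-!
For `n ≥ 1` the event `τ > n` forces `S_n > 0`. Cap every step at `-K` from below (with `K`
so large that the capped steps still have mean `≤ -a/2`) and at `M = n ^ θ` from above. Then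
either some `ξ_i`, `i < n`, exceeds `n ^ θ`, which by Markov's inequality for `exp g` has
probability at most `n · E exp g(ξ) · exp (-θ ^ α (log n) ^ α)`, or the sum of the capped steps
is nonnegative, which a Chernoff bound with parameter `n ^ (-θ)` makes at most
`exp (v - (a/2) n ^ (1 - θ))`, where `v` bounds the second moment of a capped step
(finite because `E exp g(ξ) < ∞`). Taking `θ < 1` with `θ ^ α > 1 - ε`, both bounds times
`exp ((1 - ε) g(a (n + 1)))` are `O(n⁻²)`, so `∑ₙ exp ((1 - ε) g(a (n + 1))) P(τ > n)`, which
dominates `E exp ((1 - ε) g(a τ))`, converges.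
-/

open MeasureTheory ProbabilityTheory Filter Set Topology

theorem eventually_mul_add_rpow_add_le {α κ κ' : ℝ} (hα : 1 < α) (hκ : κ < κ') (B C D : ℝ) :
    ∀ᶠ L in atTop, κ * (L + C) ^ α + B * L + D ≤ κ' * L ^ α := by
  have hlim : Tendsto (fun L => κ * (1 + C / L) ^ α + B / L ^ (α - 1) + D / L ^ α)
      atTop (𝓝 κ) := by
    have h1 : Tendsto (fun L => (1 + C / L) ^ α) atTop (𝓝 1) := by
      simpa using ((tendsto_const_nhds.div_atTop tendsto_id).const_add 1).rpow_const
        (Or.inl (by norm_num))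
    simpa using ((h1.const_mul κ).add
      (tendsto_const_nhds.div_atTop (tendsto_rpow_atTop (by linarith)))).add
      (tendsto_const_nhds.div_atTop (tendsto_rpow_atTop (by linarith)))
  filter_upwards [hlim.eventually_lt_const hκ, eventually_gt_atTop 0, eventually_ge_atTop (-C)]
    with L hlt hL hLC
  have hLα : 0 < L ^ α := Real.rpow_pos_of_pos hL α
  have key : κ * (1 + C / L) ^ α + B / L ^ (α - 1) + D / L ^ α
      = (κ * (L + C) ^ α + B * L + D) / L ^ α := by
    rw [show 1 + C / L = (L + C) / L by field_simp, Real.div_rpow (by linarith) hL.le,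
      Real.rpow_sub_one hL.ne']
    field_simp
  rw [key, div_lt_iff₀ hLα] at hlt
  exact hlt.le

theorem eventually_mul_add_rpow_add_le_exp {α : ℝ} (hα : 1 < α) (κ B C D : ℝ) {c β : ℝ}
    (hc : 0 < c) (hβ : 0 < β) :
    ∀ᶠ L in atTop, κ * (L + C) ^ α + B * L + D ≤ c * Real.exp (β * L) := by
  filter_upwards
    [eventually_mul_add_rpow_add_le hα ((le_abs_self κ).trans_lt (lt_add_one _)) B C D,
    ((isLittleO_rpow_exp_pos_mul_atTop α hβ).const_mul_left (|κ| + 1)).def hc] with L h1 h2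
  rw [Real.norm_of_nonneg (Real.exp_pos _).le] at h2
  exact h1.trans ((le_abs_self _).trans h2)

theorem exists_mul_le_add_rpow {α : ℝ} (hα : 1 < α) (B : ℝ) :
    ∃ C, ∀ L, 0 ≤ L → B * L ≤ C + L ^ α := by
  obtain ⟨L₀, hL₀⟩ := eventually_atTop.mp (eventually_mul_add_rpow_add_le hα one_pos B 0 0)
  refine ⟨|B| * max L₀ 0, fun L hL => ?_⟩
  have hLα : 0 ≤ L ^ α := Real.rpow_nonneg hL α
  rcases le_total L₀ L with h | h
  · have := hL₀ L h
    simp only [zero_mul, zero_add, add_zero, one_mul] at this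
    nlinarith [abs_nonneg B, le_max_right L₀ 0]
  · nlinarith [le_abs_self B, abs_nonneg B, le_max_left L₀ 0]

theorem exists_mem_Ioo_lt_rpow {b c : ℝ} (hb : b < 1) (hc : c < 1) (α : ℝ) :
    ∃ θ ∈ Ioo b 1, c < θ ^ α := by
  have hlim : Tendsto (fun θ : ℝ => θ ^ α) (𝓝[<] 1) (𝓝 1) := by
    simpa using (tendsto_id.rpow_const (Or.inl one_ne_zero)).mono_left nhdsWithin_le_nhds
  exact (Filter.Eventually.and (Ioo_mem_nhdsLT hb) (hlim.eventually_const_lt hc)).exists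

theorem log_max_mul_add_one_le {a x : ℝ} (hx : 1 ≤ x) :
    Real.log (max (a * (x + 1)) 1) ≤ Real.log x + Real.log (max (2 * a) 1) := by
  have hmax : 0 < max (2 * a) 1 := lt_max_of_lt_right one_pos
  rw [← Real.log_mul (by positivity) hmax.ne']
  refine Real.log_le_log (lt_max_of_lt_right one_pos) (max_le ?_ ?_)
  · nlinarith [le_max_left (2 * a) 1]
  · nlinarith [le_max_right (2 * a) 1]

theorem sq_min_max_le {K M : ℝ} (hK : 0 ≤ K) (hM : 0 ≤ M) (x : ℝ) :
    min (max x (-K)) M ^ 2 ≤ K ^ 2 + max x 0 ^ 2 := by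
  rcases le_or_gt 0 (min (max x (-K)) M) with h | h
  · have hle : min (max x (-K)) M ≤ max x 0 :=
      (min_le_left _ _).trans (max_le_max_left x (neg_nonpos.mpr hK))
    nlinarith [sq_nonneg K]
  · have : -K ≤ min (max x (-K)) M := le_min (le_max_right _ _) (by linarith)
    nlinarith [sq_nonneg (max x 0)]

theorem setOf_sum_pos_subset {Ω : Type*} (ξ : ℕ → Ω → ℝ) (K M : ℝ) (n : ℕ) :
    {ω | 0 < ∑ i ∈ Finset.range n, ξ i ω} ⊆ (⋃ i ∈ Finset.range n, {ω | M < ξ i ω})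
      ∪ {ω | 0 ≤ ∑ i ∈ Finset.range n, min (max (ξ i ω) (-K)) M} := by
  intro ω hω
  by_cases hbig : ∃ i ∈ Finset.range n, M < ξ i ω
  · obtain ⟨i, hi, hiM⟩ := hbig
    exact Or.inl (mem_biUnion hi hiM)
  · push Not at hbig
    right
    exact (hω.trans_le (Finset.sum_le_sum fun i hi => le_min (le_max_left _ _) (hbig i hi))).le

theorem sum_pos_of_lt_ladderEpoch {Ω : Type*} {ξ : ℕ → Ω → ℝ} {ω : Ω} {n : ℕ} (hn : 1 ≤ n)
    (h : n < sInf {k : ℕ | 1 ≤ k ∧ ∑ i ∈ Finset.range k, ξ i ω ≤ 0}) :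
    0 < ∑ i ∈ Finset.range n, ξ i ω :=
  not_le.mp fun hle => Nat.notMem_of_lt_sInf h ⟨hn, hle⟩

section

variable {Ω : Type*} [MeasurableSpace Ω] {μ : Measure Ω}

theorem measurable_sInf_setOf {P : ℕ → Ω → Prop} (hP : ∀ n, MeasurableSet {ω | P n ω}) :
    Measurable fun ω => sInf {n | P n ω} := by
  classical
  -- Where `P · ω` never holds, both `sInf ∅` and the first `n` with `Q ω n` are `0`.
  let Q : Ω → ℕ → Prop := fun ω n => P n ω ∨ ∀ k, ¬P k ω
  have hQ (ω : Ω) : ∃ n, Q ω n := by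
    by_cases h : ∃ n, P n ω
    · exact h.imp fun _ => Or.inl
    · exact ⟨0, Or.inr (not_exists.mp h)⟩
  have hQm (n : ℕ) : MeasurableSet {ω | Q ω n} := by
    convert (hP n).union (MeasurableSet.iInter fun k => (hP k).compl) using 1
    ext; simp [Q]
  convert measurable_find hQ hQm using 2 with ω
  refine ((Nat.find_eq_iff _).mpr ?_).symm
  by_cases h : ∃ n, P n ω
  · exact ⟨Or.inl (Nat.sInf_mem h), fun n hn => not_or.mpr
      ⟨Nat.notMem_of_lt_sInf hn, fun h' => h.elim fun k hk => h' k hk⟩⟩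
  · simp [Q, not_exists.mp h]

theorem integrable_comp_of_summable_mul_measureReal_lt [IsFiniteMeasure μ] {τ : Ω → ℕ}
    (hτ : Measurable τ) {f : ℕ → ℝ} (hf : ∀ n, 0 ≤ f n)
    (hsum : Summable fun n => f (n + 1) * μ.real {ω | n < τ ω}) :
    Integrable (fun ω => f (τ ω)) μ := by
  refine ⟨(measurable_from_nat.comp hτ).aestronglyMeasurable, ?_⟩
  rw [hasFiniteIntegral_iff_ofReal (ae_of_all _ fun ω => hf _),
    ← lintegral_map (f := fun n => ENNReal.ofReal (f n)) measurable_from_nat hτ,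
    lintegral_countable', tsum_eq_zero_add' ENNReal.summable]
  refine ENNReal.add_lt_top.mpr
    ⟨ENNReal.mul_lt_top ENNReal.ofReal_lt_top (measure_lt_top _ _), ?_⟩
  calc ∑' n : ℕ, ENNReal.ofReal (f (n + 1)) * μ.map τ {n + 1}
      ≤ ∑' n : ℕ, ENNReal.ofReal (f (n + 1) * μ.real {ω | n < τ ω}) := by
        refine ENNReal.tsum_le_tsum fun n => ?_
        rw [ENNReal.ofReal_mul (hf _), ofReal_measureReal,
          Measure.map_apply hτ (measurableSet_singleton _)]
        gcongr
        exact fun ω (hω : τ ω = n + 1) => show n < τ ω by omega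
    _ = ENNReal.ofReal (∑' n, f (n + 1) * μ.real {ω | n < τ ω}) :=
        (ENNReal.ofReal_tsum_of_nonneg (fun n => mul_nonneg (hf _) measureReal_nonneg) hsum).symm
    _ < ⊤ := ENNReal.ofReal_lt_top

theorem integrable_of_abs_le [IsFiniteMeasure μ] {X : Ω → ℝ} (hX : Measurable X) {M : ℝ}
    (hXM : ∀ ω, |X ω| ≤ M) : Integrable X μ :=
  .of_bound hX.aestronglyMeasurable M (ae_of_all _ hXM)

theorem mgf_le_exp_of_abs_le [IsProbabilityMeasure μ] {X : Ω → ℝ} (hX : Measurable X)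
    {M t : ℝ} (hXM : ∀ ω, |X ω| ≤ M) (ht : |t| * M ≤ 1) :
    mgf X μ t ≤ Real.exp (t * ∫ ω, X ω ∂μ + t ^ 2 * ∫ ω, X ω ^ 2 ∂μ) := by
  have htX (ω : Ω) : |t * X ω| ≤ 1 := by
    rw [abs_mul]; exact (mul_le_mul_of_nonneg_left (hXM ω) (abs_nonneg t)).trans ht
  have hX1 : Integrable X μ := integrable_of_abs_le hX hXM
  have hX2 : Integrable (fun ω => X ω ^ 2) μ :=
    integrable_of_abs_le (hX.pow_const 2) fun ω => by
      rw [abs_pow]; exact pow_le_pow_left₀ (abs_nonneg _) (hXM ω) 2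
  have hexp : Integrable (fun ω => Real.exp (t * X ω)) μ :=
    integrable_of_abs_le (by fun_prop) fun ω => by
      rw [Real.abs_exp]; exact Real.exp_le_exp.mpr (le_of_abs_le (htX ω))
  have hlin : Integrable (fun ω => 1 + t * X ω) μ := (integrable_const 1).add (hX1.const_mul t)
  calc mgf X μ t ≤ ∫ ω, (1 + t * X ω + t ^ 2 * X ω ^ 2) ∂μ := by
        refine integral_mono hexp (hlin.add (hX2.const_mul _)) fun ω => ?_
        have h := abs_le.mp (Real.abs_exp_sub_one_sub_id_le (htX ω))
        dsimp only
        linarith [h.2, mul_pow t (X ω) 2]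
    _ = 1 + (t * ∫ ω, X ω ∂μ + t ^ 2 * ∫ ω, X ω ^ 2 ∂μ) := by
        rw [integral_add hlin (hX2.const_mul _),
          integral_add (integrable_const 1) (hX1.const_mul t), integral_const,
          integral_const_mul, integral_const_mul, probReal_univ, one_smul, add_assoc]
    _ ≤ _ := by linarith [Real.add_one_le_exp (t * ∫ ω, X ω ∂μ + t ^ 2 * ∫ ω, X ω ^ 2 ∂μ)]

theorem measureReal_sum_nonneg_le_exp [IsProbabilityMeasure μ] {η : ℕ → Ω → ℝ}
    (hmeas : ∀ i, Measurable (η i)) (hindep : iIndepFun η μ)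
    (hident : ∀ i, IdentDistrib (η i) (η 0) μ μ) {M : ℝ} (hM : 0 < M)
    (hηM : ∀ i ω, |η i ω| ≤ M) (n : ℕ) :
    μ.real {ω | 0 ≤ ∑ i ∈ Finset.range n, η i ω}
      ≤ Real.exp (n * ((∫ ω, η 0 ω ∂μ) / M + (∫ ω, η 0 ω ^ 2 ∂μ) / M ^ 2)) := by
  have hint : Integrable (fun ω => Real.exp (M⁻¹ * (∑ i ∈ Finset.range n, η i) ω)) μ :=
    hindep.integrable_exp_mul_sum hmeas fun i _ =>
      integrable_of_abs_le (by fun_prop) fun ω => by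
        rw [Real.abs_exp]
        exact Real.exp_le_exp.mpr
          (mul_le_mul_of_nonneg_left (le_of_abs_le (hηM i ω)) (by positivity))
  have hmgf : mgf (η 0) μ M⁻¹
      ≤ Real.exp ((∫ ω, η 0 ω ∂μ) / M + (∫ ω, η 0 ω ^ 2 ∂μ) / M ^ 2) := by
    refine (mgf_le_exp_of_abs_le (hmeas 0) (hηM 0) ?_).trans_eq (by congr 1; ring)
    rw [abs_inv, abs_of_pos hM, inv_mul_cancel₀ hM.ne']
  calc μ.real {ω | 0 ≤ ∑ i ∈ Finset.range n, η i ω}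
      ≤ mgf (∑ i ∈ Finset.range n, η i) μ M⁻¹ := by
        simpa [Finset.sum_apply] using measure_ge_le_exp_mul_mgf 0 (inv_nonneg.mpr hM.le) hint
    _ = mgf (η 0) μ M⁻¹ ^ n := by
        rw [hindep.mgf_sum hmeas, Finset.prod_congr rfl fun i _ =>
          mgf_congr_of_identDistrib _ _ (hident i) _, Finset.prod_const, Finset.card_range]
    _ ≤ _ := by
        rw [Real.exp_nat_mul]
        exact pow_le_pow_left₀ mgf_nonneg hmgf n

theorem exists_integral_max_neg_le {X : Ω → ℝ} (hX : Integrable X μ) {c : ℝ}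
    (hc : ∫ ω, X ω ∂μ < c) : ∃ K : ℕ, ∫ ω, max (X ω) (-K) ∂μ ≤ c := by
  have hbound (K : ℕ) (ω : Ω) : |max (X ω) (-K)| ≤ |X ω| :=
    abs_le.mpr ⟨(neg_abs_le _).trans (le_max_left _ _),
      max_le (le_abs_self _) ((neg_nonpos.mpr K.cast_nonneg).trans (abs_nonneg _))⟩
  have hlim : Tendsto (fun K : ℕ => ∫ ω, max (X ω) (-K) ∂μ) atTop (nhds (∫ ω, X ω ∂μ)) := by
    refine tendsto_integral_of_dominated_convergence (fun ω => |X ω|)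
      (fun K => hX.aestronglyMeasurable.sup aestronglyMeasurable_const) hX.abs
      (fun K => ae_of_all _ (hbound K)) (ae_of_all _ fun ω => tendsto_const_nhds.congr' ?_)
    filter_upwards [eventually_ge_atTop ⌈-X ω⌉₊] with K hK
    exact (max_eq_left (neg_le.mp ((Nat.le_ceil _).trans (by exact_mod_cast hK)))).symm
  exact (hlim.eventually_le_const hc).exists

theorem measureReal_sum_pos_le [IsProbabilityMeasure μ] {ξ : ℕ → Ω → ℝ}
    (hmeas : ∀ i, Measurable (ξ i)) (hindep : iIndepFun ξ μ)
    (hident : ∀ i, IdentDistrib (ξ i) (ξ 0) μ μ) (hint : Integrable (ξ 0) μ)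
    (hsq : Integrable (fun ω => max (ξ 0 ω) 0 ^ 2) μ) {K M : ℝ} (hK : 0 ≤ K) (hKM : K ≤ M)
    (hM : 0 < M) (n : ℕ) :
    μ.real {ω | 0 < ∑ i ∈ Finset.range n, ξ i ω}
      ≤ n * μ.real {ω | M < ξ 0 ω} + Real.exp (n * ((∫ ω, max (ξ 0 ω) (-K) ∂μ) / M
          + (K ^ 2 + ∫ ω, max (ξ 0 ω) 0 ^ 2 ∂μ) / M ^ 2)) := by
  -- Cutting at `-K` keeps the mean negative and the second moment finite; cutting at `M`
  -- makes `1 / M` an admissible Chernoff parameter.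
  set φ : ℝ → ℝ := fun x => min (max x (-K)) M
  have hφm : Measurable φ := by fun_prop
  have hφM (x : ℝ) : |φ x| ≤ M :=
    abs_le.mpr ⟨le_min (by linarith [le_max_right x (-K)]) (by linarith), min_le_right _ _⟩
  have hmean : ∫ ω, φ (ξ 0 ω) ∂μ ≤ ∫ ω, max (ξ 0 ω) (-K) ∂μ :=
    integral_mono (integrable_of_abs_le (hφm.comp (hmeas 0)) fun ω => hφM _)
      (hint.sup (integrable_const _)) fun ω => min_le_left _ _
  have hvar : ∫ ω, φ (ξ 0 ω) ^ 2 ∂μ ≤ K ^ 2 + ∫ ω, max (ξ 0 ω) 0 ^ 2 ∂μ := by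
    calc ∫ ω, φ (ξ 0 ω) ^ 2 ∂μ ≤ ∫ ω, (K ^ 2 + max (ξ 0 ω) 0 ^ 2) ∂μ :=
          integral_mono (integrable_of_abs_le (M := M ^ 2) (by fun_prop) fun ω => ?_)
            ((integrable_const _).add hsq) fun ω => sq_min_max_le hK (hKM.trans' hK) _
      _ = K ^ 2 + ∫ ω, max (ξ 0 ω) 0 ^ 2 ∂μ := by
          rw [integral_add (integrable_const _) hsq, integral_const, probReal_univ, one_smul]
    rw [abs_pow]; exact pow_le_pow_left₀ (abs_nonneg _) (hφM _) 2
  calc μ.real {ω | 0 < ∑ i ∈ Finset.range n, ξ i ω}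
      ≤ ∑ i ∈ Finset.range n, μ.real {ω | M < ξ i ω}
          + μ.real {ω | 0 ≤ ∑ i ∈ Finset.range n, φ (ξ i ω)} :=
        (measureReal_mono (setOf_sum_pos_subset ξ K M n)).trans
          ((measureReal_union_le _ _).trans (add_le_add (measureReal_biUnion_finset_le _ _) le_rfl))
    _ ≤ _ := by
        gcongr ?_ + ?_
        · rw [Finset.sum_congr rfl fun i _ => ?_, Finset.sum_const, Finset.card_range,
            nsmul_eq_mul]
          exact congrArg ENNReal.toReal ((hident i).measure_mem_eq measurableSet_Ioi)
        · refine (measureReal_sum_nonneg_le_exp (fun i => hφm.comp (hmeas i))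
            (hindep.comp (fun _ => φ) fun _ => hφm) (fun i => (hident i).comp hφm) hM
            (fun i ω => hφM _) n).trans ?_
          gcongr Real.exp (_ * (?_ / _ + ?_ / _))
          exacts [hmean, hvar]

theorem integrable_max_sq_of_integrable_exp_log_rpow [IsFiniteMeasure μ] {X : Ω → ℝ}
    (hX : Measurable X) {α : ℝ} (hα : 1 < α)
    (hg : Integrable (fun ω => Real.exp (Real.log (max (X ω) 1) ^ α)) μ) :
    Integrable (fun ω => max (X ω) 0 ^ 2) μ := by
  obtain ⟨C, hC⟩ := exists_mul_le_add_rpow hα 2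
  refine (hg.const_mul (Real.exp C)).mono' (by fun_prop) (ae_of_all _ fun ω => ?_)
  have hpos : 0 < max (X ω) 1 := lt_max_of_lt_right one_pos
  calc ‖max (X ω) 0 ^ 2‖ ≤ max (X ω) 1 ^ 2 := by
        rw [Real.norm_of_nonneg (sq_nonneg _)]
        exact pow_le_pow_left₀ (le_max_right _ _) (max_le_max_left _ zero_le_one) 2
    _ = Real.exp (2 * Real.log (max (X ω) 1)) := by
        rw [two_mul, Real.exp_add, Real.exp_log hpos, sq]
    _ ≤ Real.exp C * Real.exp (Real.log (max (X ω) 1) ^ α) := by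
        rw [← Real.exp_add]
        exact Real.exp_le_exp.mpr (hC _ (Real.log_nonneg (le_max_right _ _)))

theorem measureReal_lt_le_mul_exp_neg_log_rpow [IsFiniteMeasure μ] {X : Ω → ℝ} {α : ℝ}
    (hα : 0 ≤ α) (hg : Integrable (fun ω => Real.exp (Real.log (max (X ω) 1) ^ α)) μ)
    {M : ℝ} (hM : 1 ≤ M) :
    μ.real {ω | M < X ω}
      ≤ (∫ ω, Real.exp (Real.log (max (X ω) 1) ^ α) ∂μ) * Real.exp (-(Real.log M ^ α)) := by
  have hsub : {ω | M < X ω} ⊆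
      {ω | Real.exp (Real.log M ^ α) ≤ Real.exp (Real.log (max (X ω) 1) ^ α)} := fun ω hω =>
    Real.exp_le_exp.mpr (Real.rpow_le_rpow (Real.log_nonneg hM)
      (Real.log_le_log (by linarith) (hω.le.trans (le_max_left _ _))) hα)
  have hmarkov := mul_meas_ge_le_integral_of_nonneg
    (ae_of_all μ fun ω => (Real.exp_pos _).le) hg (Real.exp (Real.log M ^ α))
  rw [Real.exp_neg, ← div_eq_mul_inv, le_div_iff₀ (Real.exp_pos _), mul_comm]
  exact (mul_le_mul_of_nonneg_left (measureReal_mono hsub) (Real.exp_pos _).le).trans hmarkov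

theorem measureReal_ladderEpoch_gt_le [IsProbabilityMeasure μ] {ξ : ℕ → Ω → ℝ}
    (hmeas : ∀ i, Measurable (ξ i)) (hindep : iIndepFun ξ μ)
    (hident : ∀ i, IdentDistrib (ξ i) (ξ 0) μ μ) (hint : Integrable (ξ 0) μ)
    (hsq : Integrable (fun ω => max (ξ 0 ω) 0 ^ 2) μ) {α : ℝ} (hα : 0 ≤ α)
    (hg : Integrable (fun ω => Real.exp (Real.log (max (ξ 0 ω) 1) ^ α)) μ) {τ : Ω → ℕ}
    (hτ : ∀ ω, τ ω = sInf {n : ℕ | 1 ≤ n ∧ ∑ i ∈ Finset.range n, ξ i ω ≤ 0})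
    {K θ : ℝ} (hK : 0 ≤ K) (hθ : 1 / 2 ≤ θ) {n : ℕ} (hn : 1 ≤ n) (hKn : K ≤ (n : ℝ) ^ θ) :
    μ.real {ω | n < τ ω}
      ≤ Real.exp (Real.log n + Real.log (∫ ω, Real.exp (Real.log (max (ξ 0 ω) 1) ^ α) ∂μ)
            - θ ^ α * Real.log n ^ α)
        + Real.exp ((K ^ 2 + ∫ ω, max (ξ 0 ω) 0 ^ 2 ∂μ)
            + (∫ ω, max (ξ 0 ω) (-K) ∂μ) * Real.exp ((1 - θ) * Real.log n)) := by
  set G := ∫ ω, Real.exp (Real.log (max (ξ 0 ω) 1) ^ α) ∂μ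
  set v := K ^ 2 + ∫ ω, max (ξ 0 ω) 0 ^ 2 ∂μ
  set m := ∫ ω, max (ξ 0 ω) (-K) ∂μ
  set L := Real.log n
  have hL : 0 ≤ L := Real.log_nonneg (by exact_mod_cast hn)
  have hnL : (n : ℝ) = Real.exp L := (Real.exp_log (by positivity)).symm
  have hM : (n : ℝ) ^ θ = Real.exp (θ * L) := by rw [hnL, ← Real.exp_mul, mul_comm]
  have hM1 : 1 ≤ (n : ℝ) ^ θ := by rw [hM]; exact Real.one_le_exp (by nlinarith)
  have hv : 0 ≤ v := add_nonneg (sq_nonneg K) (integral_nonneg fun ω => sq_nonneg _)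
  have hnM : (n : ℝ) / n ^ θ = Real.exp ((1 - θ) * L) := by
    rw [hM, hnL, ← Real.exp_sub]; ring_nf
  have hnM2 : (n : ℝ) / (n ^ θ) ^ 2 ≤ 1 := by
    rw [div_le_one (by positivity), hM, hnL, sq, ← Real.exp_add]
    exact Real.exp_le_exp.mpr (by nlinarith)
  have hmarkov : (n : ℝ) * (G * Real.exp (-(Real.log ((n : ℝ) ^ θ) ^ α)))
      = Real.exp (L + Real.log G - θ ^ α * L ^ α) := by
    rw [Real.exp_sub, Real.exp_add, Real.exp_log (integral_exp_pos hg), ← hnL, hM, Real.log_exp,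
      Real.mul_rpow (by linarith) hL, Real.exp_neg, div_eq_mul_inv]
    ring
  calc μ.real {ω | n < τ ω} ≤ μ.real {ω | 0 < ∑ i ∈ Finset.range n, ξ i ω} :=
        measureReal_mono fun ω hω => sum_pos_of_lt_ladderEpoch hn ((hτ ω) ▸ hω)
    _ ≤ n * μ.real {ω | (n : ℝ) ^ θ < ξ 0 ω}
          + Real.exp (n * (m / n ^ θ + v / (n ^ θ) ^ 2)) :=
        measureReal_sum_pos_le hmeas hindep hident hint hsq hK hKn (by linarith) n
    _ ≤ n * (G * Real.exp (-(Real.log ((n : ℝ) ^ θ) ^ α)))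
          + Real.exp (v + m * (n / n ^ θ)) := by
        gcongr ?_ + Real.exp ?_
        · gcongr
          exact measureReal_lt_le_mul_exp_neg_log_rpow hα hg hM1
        · calc (n : ℝ) * (m / n ^ θ + v / (n ^ θ) ^ 2)
                = v * (n / (n ^ θ) ^ 2) + m * (n / n ^ θ) := by ring
            _ ≤ v + m * (n / n ^ θ) := by gcongr; exact mul_le_of_le_one_right hv hnM2
    _ = _ := by rw [hmarkov, hnM]

theorem eventually_exp_mul_measureReal_ladderEpoch_gt_le [IsProbabilityMeasure μ]
    {ξ : ℕ → Ω → ℝ} (hmeas : ∀ i, Measurable (ξ i)) (hindep : iIndepFun ξ μ)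
    (hident : ∀ i, IdentDistrib (ξ i) (ξ 0) μ μ) (hint : Integrable (ξ 0) μ) {a K : ℝ}
    (ha : 0 < a) (hK : 0 ≤ K) (hKa : ∫ ω, max (ξ 0 ω) (-K) ∂μ ≤ -(a / 2)) {α : ℝ} (hα : 1 < α)
    (hg : Integrable (fun ω => Real.exp (Real.log (max (ξ 0 ω) 1) ^ α)) μ) {τ : Ω → ℕ}
    (hτ : ∀ ω, τ ω = sInf {n : ℕ | 1 ≤ n ∧ ∑ i ∈ Finset.range n, ξ i ω ≤ 0})
    {κ θ : ℝ} (hκ : 0 ≤ κ) (hθ : θ ∈ Ioo (1 / 2) 1) (hκθ : κ < θ ^ α) :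
    ∀ᶠ n : ℕ in atTop, Real.exp (κ * Real.log (max (a * ((n + 1 : ℕ) : ℝ)) 1) ^ α)
      * μ.real {ω | n < τ ω} ≤ 2 * (n : ℝ) ^ (-2 : ℝ) := by
  have hsq := integrable_max_sq_of_integrable_exp_log_rpow (hmeas 0) hα hg
  set C := Real.log (max (2 * a) 1)
  have hlog := Real.tendsto_log_atTop.comp tendsto_natCast_atTop_atTop
  filter_upwards [eventually_ge_atTop 1,
    ((tendsto_rpow_atTop (by linarith [hθ.1] : 0 < θ)).comp
      tendsto_natCast_atTop_atTop).eventually_ge_atTop K,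
    hlog.eventually (eventually_mul_add_rpow_add_le hα hκθ 3 C
      (Real.log (∫ ω, Real.exp (Real.log (max (ξ 0 ω) 1) ^ α) ∂μ))),
    hlog.eventually (eventually_mul_add_rpow_add_le_exp hα κ 2 C
      (K ^ 2 + ∫ ω, max (ξ 0 ω) 0 ^ 2 ∂μ) (half_pos ha) (sub_pos.mpr hθ.2))]
    with n hn hKn h₁ h₂
  simp only [Function.comp_apply] at hKn h₁ h₂
  have hf : Real.exp (κ * Real.log (max (a * ((n + 1 : ℕ) : ℝ)) 1) ^ α)
      ≤ Real.exp (κ * (Real.log n + C) ^ α) := by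
    gcongr
    · exact Real.log_nonneg (le_max_right _ _)
    · rw [Nat.cast_succ]
      exact log_max_mul_add_one_le (by exact_mod_cast hn)
  have htail := measureReal_ladderEpoch_gt_le hmeas hindep hident hint hsq (by linarith) hg hτ
    hK hθ.1.le hn hKn
  rw [Real.rpow_def_of_pos (Nat.cast_pos.mpr hn)]
  refine (mul_le_mul hf htail measureReal_nonneg (Real.exp_pos _).le).trans ?_
  rw [mul_add, ← Real.exp_add, ← Real.exp_add]
  refine (add_le_add (Real.exp_le_exp.mpr ?_) (Real.exp_le_exp.mpr ?_)).trans_eq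
    (two_mul _).symm
  · linarith
  · linarith [mul_le_mul_of_nonneg_right hKa (Real.exp_pos ((1 - θ) * Real.log n)).le]

end

theorem ladder_epoch_lognormal_moment_general
    {Ω : Type*} [MeasurableSpace Ω] {μ : Measure Ω} [IsProbabilityMeasure μ]
    (ξ : ℕ → Ω → ℝ) (hmeas : ∀ i, Measurable (ξ i))
    (hindep : iIndepFun ξ μ)
    (hident : ∀ i, IdentDistrib (ξ i) (ξ 0) μ μ)
    (a : ℝ) (ha : 0 < a)
    (hint : Integrable (ξ 0) μ) (hmean : ∫ ω, ξ 0 ω ∂μ = -a)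
    (α : ℝ) (hα : 1 < α)
    (hgmom : Integrable (fun ω => Real.exp (Real.log (max (ξ 0 ω) 1) ^ α)) μ)
    (τ : Ω → ℕ)
    (hτ : ∀ ω, τ ω = sInf {n : ℕ | 1 ≤ n ∧ ∑ i ∈ Finset.range n, ξ i ω ≤ 0})
    (ε : ℝ) (hε : ε ∈ Set.Ioo (0:ℝ) 1) :
    Integrable
      (fun ω => Real.exp ((1 - ε) * Real.log (max (a * (τ ω : ℝ)) 1) ^ α)) μ := by
  obtain ⟨hε0, hε1⟩ := hε
  have hτm : Measurable τ := funext hτ ▸ measurable_sInf_setOf fun n =>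
    (MeasurableSet.const _).inter
      (measurableSet_le (Finset.measurable_sum _ fun i _ => hmeas i) measurable_const)
  obtain ⟨K, hK⟩ := exists_integral_max_neg_le hint (c := -(a / 2)) (by linarith)
  obtain ⟨θ, hθ, hθα⟩ := exists_mem_Ioo_lt_rpow (by norm_num : (1 / 2 : ℝ) < 1)
    (by linarith : 1 - ε < 1) α
  refine integrable_comp_of_summable_mul_measureReal_lt hτm
    (f := fun m : ℕ => Real.exp ((1 - ε) * Real.log (max (a * m) 1) ^ α))
    (fun _ => (Real.exp_pos _).le) ?_
  refine Summable.of_norm_bounded_eventually_nat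
    ((Real.summable_nat_rpow.mpr (by norm_num : (-2 : ℝ) < -1)).mul_left 2) ?_
  filter_upwards [eventually_exp_mul_measureReal_ladderEpoch_gt_le hmeas hindep hident hint ha
    K.cast_nonneg hK hα hgmom hτ (by linarith) hθ hθα] with n hn
  rwa [Real.norm_of_nonneg (by positivity)]

/-- **Remark 2, lognormal-type case.** For `g(x) = (log max(x,1))^α` with `α > 1`,
the conclusion of the main theorem holds with `δ = 0`: if `E exp(c ξ) = ∞` for all
`c > 0` and `E exp(g(ξ)) < ∞`, then `E exp((1-ε) g(a τ)) < ∞` for every `ε ∈ (0,1)`. -/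
theorem ladder_epoch_lognormal_moment
    {Ω : Type*} [MeasurableSpace Ω] {μ : Measure Ω} [IsProbabilityMeasure μ]
    (ξ : ℕ → Ω → ℝ) (hmeas : ∀ i, Measurable (ξ i))
    (hindep : iIndepFun ξ μ)
    (hident : ∀ i, IdentDistrib (ξ i) (ξ 0) μ μ)
    (a : ℝ) (ha : 0 < a)
    (hint : Integrable (ξ 0) μ) (hmean : ∫ ω, ξ 0 ω ∂μ = -a)
    (hheavy : ∀ c : ℝ, 0 < c → ¬ Integrable (fun ω => Real.exp (c * ξ 0 ω)) μ)
    (α : ℝ) (hα : 1 < α)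
    (hgmom : Integrable (fun ω => Real.exp (Real.log (max (ξ 0 ω) 1) ^ α)) μ)
    (τ : Ω → ℕ)
    (hτ : ∀ ω, τ ω = sInf {n : ℕ | 1 ≤ n ∧ ∑ i ∈ Finset.range n, ξ i ω ≤ 0})
    (ε : ℝ) (hε : ε ∈ Set.Ioo (0:ℝ) 1) :
    Integrable
      (fun ω => Real.exp ((1 - ε) * Real.log (max (a * (τ ω : ℝ)) 1) ^ α)) μ :=
  ladder_epoch_lognormal_moment_general ξ hmeas hindep hident a ha hint hmean α hα hgmom τ hτ ε hε
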